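/- arXiv:1806.00279 — 5 statements merged into one kernel-verified Lean document; each statement's English description precedes it below -/
import Mathlib

section
/- Let q be a prime power, n ≥ 2, and let ℓ be a 2-dimensional subspace (line) of F_q^n with p a 1-dimensional subspace (point) of ℓ. Let Z be a set of k-dimensional subspaces of F_q^n each of which meets ℓ exactly in p. Define Z' = { ⟨z, ℓ⟩/ℓ : z ∈ Z }, a set of subspaces of the quotient F_q^n/ℓ. Then |Z'| ≥ |Z| / [k choose 1]_q, where [k choose 1]_q = (q^k - 1)/(q - 1). -/
open Module

private lemma finite_submodule {F W : Type*} [Field F] [Fintype F] [AddCommMonoid W] [Module F W]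
    [Module.Finite F W] : Finite (Submodule F W) := by
  have : Finite W := Module.finite_of_finite F
  exact Finite.of_injective (fun s => (s : Set W)) SetLike.coe_injective

set_option synthInstance.maxHeartbeats 400000 in
/-- The number of 1-dimensional subspaces of `W`, times `q - 1`, is at most `q ^ dim W - 1`. -/
private lemma aux_points_card (F M : Type*) [Field F] [Fintype F] [AddCommGroup M] [Module F M]
    [FiniteDimensional F M] (W : Submodule F M) :
    Nat.card {x : Submodule F M // finrank F x = 1 ∧ x ≤ W} * (Fintype.card F - 1)
      ≤ Fintype.card F ^ finrank F W - 1 := by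
  classical
  have : Finite M := Module.finite_of_finite F
  have : Fintype M := Fintype.ofFinite M
  have hv : ∀ x : {x : Submodule F M // finrank F x = 1 ∧ x ≤ W},
      ∃ v : M, v ∈ x.1 ∧ v ≠ 0 := by
    intro x
    have hxb : x.1 ≠ ⊥ := by
      intro h
      have := x.2.1
      rw [h, finrank_bot] at this
      omega
    obtain ⟨v, hv1, hv2⟩ := x.1.ne_bot_iff.mp hxb
    exact ⟨v, hv1, hv2⟩
  choose v hv1 hv2 using hv
  have hspan : ∀ x : {x : Submodule F M // finrank F x = 1 ∧ x ≤ W},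
      x.1 = Submodule.span F {v x} := by
    intro x
    refine (Submodule.eq_of_le_of_finrank_le ?_ ?_).symm
    · exact (Submodule.span_singleton_le_iff_mem _ _).mpr (hv1 x)
    · rw [x.2.1, finrank_span_singleton (hv2 x)]
  have key : Function.Injective
      (fun pc : {x : Submodule F M // finrank F x = 1 ∧ x ≤ W} × {c : F // c ≠ 0} =>
        (⟨⟨pc.2.1 • v pc.1, W.smul_mem _ (pc.1.2.2 (hv1 pc.1))⟩, by
          simp only [ne_eq, Submodule.mk_eq_zero]
          exact smul_ne_zero pc.2.2 (hv2 pc.1)⟩ : {w : ↥W // w ≠ 0})) := by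
    rintro ⟨x, c⟩ ⟨y, d⟩ h
    simp only [Subtype.mk.injEq] at h
    have hxy : x = y := by
      have hvy : v y ∈ x.1 := by
        have : v y = d.1⁻¹ • (d.1 • v y) := by
          rw [smul_smul, inv_mul_cancel₀ d.2, one_smul]
        rw [this, ← h]
        exact x.1.smul_mem _ (x.1.smul_mem _ (hv1 x))
      apply Subtype.ext
      refine (Submodule.eq_of_le_of_finrank_le ?_ ?_).symm
      · rw [hspan y]
        exact (Submodule.span_singleton_le_iff_mem _ _).mpr hvy
      · rw [x.2.1, y.2.1]
    subst hxy
    have hcd : c.1 = d.1 := by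
      have h2 : (c.1 - d.1) • v x = 0 := by rw [sub_smul, h, sub_self]
      rcases smul_eq_zero.mp h2 with h3 | h3
      · exact sub_eq_zero.mp h3
      · exact absurd h3 (hv2 x)
    exact Prod.ext rfl (Subtype.ext hcd)
  have hcard1 : Nat.card ({x : Submodule F M // finrank F x = 1 ∧ x ≤ W} × {c : F // c ≠ 0})
      ≤ Nat.card {w : ↥W // w ≠ 0} := Nat.card_le_card_of_injective _ key
  rw [Nat.card_prod] at hcard1
  have hc : Nat.card {c : F // c ≠ 0} = Fintype.card F - 1 := by
    rw [Nat.card_congr (unitsEquivNeZero (G₀ := F)).symm, Nat.card_eq_fintype_card,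
      Fintype.card_units]
  have hw : Nat.card {w : ↥W // w ≠ 0} = Fintype.card F ^ finrank F W - 1 := by
    rw [Nat.card_eq_fintype_card]
    have h4 := Fintype.card_subtype_compl (fun w : ↥W => w = 0)
    rw [Fintype.card_subtype_eq (0 : ↥W)] at h4
    rw [h4, card_eq_pow_finrank (K := F) (V := ↥W)]
  rw [hc] at hcard1
  rw [hw] at hcard1
  exact hcard1

set_option synthInstance.maxHeartbeats 400000 in
/-- Fiber bound: a family of `k`-spaces all meeting `ℓ` exactly in `p` and all having the
same span with `ℓ` has size at most `(q ^ k - 1) / (q - 1)`. -/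
private lemma aux_fiber (F V : Type*) [Field F] [Fintype F] [AddCommGroup V] [Module F V]
    [FiniteDimensional F V] (k : ℕ) (ℓ p : Submodule F V)
    (hℓ : finrank F ℓ = 2) (hp : finrank F p = 1) (hpℓ : p ≤ ℓ)
    (S : Set (Submodule F V))
    (hS : ∀ z ∈ S, finrank F z = k ∧ z ⊓ ℓ = p)
    (hsup : ∀ z₁ ∈ S, ∀ z₂ ∈ S, z₁ ⊔ ℓ = z₂ ⊔ ℓ) :
    Nat.card S * (Fintype.card F - 1) ≤ Fintype.card F ^ k - 1 := by
  classical
  rcases S.eq_empty_or_nonempty with rfl | ⟨z₀, hz₀⟩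
  · simp
  set Y := z₀ ⊔ ℓ with hYdef
  have hzY : ∀ z ∈ S, z ≤ Y := fun z hz => le_sup_left.trans_eq (hsup z hz z₀ hz₀)
  have hpz : ∀ z ∈ S, p ≤ z := fun z hz => (hS z hz).2 ▸ inf_le_left
  have hpY : p ≤ Y := hpℓ.trans le_sup_right
  have hYr : finrank F Y = k + 1 := by
    have h0 := Submodule.finrank_sup_add_finrank_inf_eq z₀ ℓ
    rw [(hS z₀ hz₀).2, hp, hℓ, (hS z₀ hz₀).1, ← hYdef] at h0
    omega
  set p' := p.comap Y.subtype with hp'def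
  have hp'r : finrank F p' = 1 := by
    rw [(Submodule.comapSubtypeEquivOfLe hpY).finrank_eq]; exact hp
  set Wd := p'.dualAnnihilator with hWddef
  have hWdr : finrank F Wd = k := by
    have h1 := Submodule.finrank_quotient_add_finrank p'
    have h2 : finrank F Wd = finrank F (↥Y ⧸ p') :=
      (Subspace.quotEquivAnnihilator p').finrank_eq.symm
    omega
  have hannle : ∀ z ∈ S, (z.comap Y.subtype).dualAnnihilator ≤ Wd := by
    intro z hz
    exact Subspace.dualAnnihilator_le_dualAnnihilator_iff.mpr
      (Submodule.comap_mono (hpz z hz))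
  have hannr : ∀ z ∈ S, finrank F ((z.comap Y.subtype).dualAnnihilator) = 1 := by
    intro z hz
    have hz'r : finrank F (z.comap Y.subtype) = k := by
      rw [(Submodule.comapSubtypeEquivOfLe (hzY z hz)).finrank_eq]; exact (hS z hz).1
    have h1 := Submodule.finrank_quotient_add_finrank (z.comap Y.subtype)
    have h2 : finrank F ((z.comap Y.subtype).dualAnnihilator)
        = finrank F (↥Y ⧸ z.comap Y.subtype) :=
      (Subspace.quotEquivAnnihilator _).finrank_eq.symm
    omega
  let g : S → {x : Submodule F (Dual F ↥Y) // finrank F x = 1 ∧ x ≤ Wd} := fun z =>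
    ⟨(z.1.comap Y.subtype).dualAnnihilator, hannr z.1 z.2, hannle z.1 z.2⟩
  have hginj : Function.Injective g := by
    rintro ⟨z₁, hz₁⟩ ⟨z₂, hz₂⟩ h
    simp only [g, Subtype.mk.injEq] at h
    have h3 : z₁.comap Y.subtype = z₂.comap Y.subtype :=
      Subspace.dualAnnihilator_inj.mp h
    have e2 := congrArg (Submodule.map Y.subtype) h3
    rw [Submodule.map_comap_subtype, Submodule.map_comap_subtype,
      inf_eq_right.mpr (hzY z₁ hz₁), inf_eq_right.mpr (hzY z₂ hz₂)] at e2
    exact Subtype.ext e2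
  have : Finite (Submodule F (Dual F ↥Y)) := finite_submodule
  have hle : Nat.card S ≤ Nat.card {x : Submodule F (Dual F ↥Y) // finrank F x = 1 ∧ x ≤ Wd} :=
    Nat.card_le_card_of_injective g hginj
  calc Nat.card S * (Fintype.card F - 1)
      ≤ Nat.card {x : Submodule F (Dual F ↥Y) // finrank F x = 1 ∧ x ≤ Wd}
          * (Fintype.card F - 1) := Nat.mul_le_mul_right _ hle
    _ ≤ Fintype.card F ^ finrank F Wd - 1 := aux_points_card F (Dual F ↥Y) Wd
    _ = Fintype.card F ^ k - 1 := by rw [hWdr]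

/-- Lemma 3.2: if `Z` is a set of `k`-spaces of `F_q^n` each meeting the line `ℓ`
exactly in the point `p`, and `Z' = {⟨z,ℓ⟩/ℓ : z ∈ Z}`, then `|Z'| ≥ |Z|/[k choose 1]_q`. -/
theorem quotient_lemma (q n k : ℕ) (hq : IsPrimePow q) (hn : 2 ≤ n)
    (F : Type) [Field F] [Fintype F] (hF : Fintype.card F = q)
    (ℓ p : Submodule F (Fin n → F))
    (hℓ : Module.finrank F ℓ = 2) (hp : Module.finrank F p = 1) (hpℓ : p ≤ ℓ)
    (Z : Set (Submodule F (Fin n → F)))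
    (hZ : ∀ z ∈ Z, Module.finrank F z = k ∧ z ⊓ ℓ = p)
    (Z' : Set (Submodule F ((Fin n → F) ⧸ ℓ)))
    (hZ' : Z' = (fun z : Submodule F (Fin n → F) => (z ⊔ ℓ).map ℓ.mkQ) '' Z) :
    (Nat.card Z' : ℚ) ≥ (Nat.card Z : ℚ) / (((q : ℚ) ^ k - 1) / ((q : ℚ) - 1)) := by
  classical
  have hq2 : 2 ≤ q := hq.two_le
  have hfin1 : Finite (Submodule F (Fin n → F)) := finite_submodule
  have hfin2 : Finite (Submodule F ((Fin n → F) ⧸ ℓ)) := finite_submodule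
  have hZf : Z.Finite := Set.toFinite Z
  have hZ'f : Z'.Finite := Set.toFinite Z'
  set f : Submodule F (Fin n → F) → Submodule F ((Fin n → F) ⧸ ℓ) :=
    fun z => (z ⊔ ℓ).map ℓ.mkQ with hfdef
  have hmaps : ∀ z ∈ hZf.toFinset, f z ∈ hZ'f.toFinset := by
    intro z hz
    rw [Set.Finite.mem_toFinset] at hz ⊢
    rw [hZ']
    exact Set.mem_image_of_mem _ hz
  have hcard := Finset.card_eq_sum_card_fiberwise hmaps
  -- key natural number inequality
  have key : Nat.card Z * (q - 1) ≤ Nat.card Z' * (q ^ k - 1) := by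
    rw [Nat.card_eq_card_finite_toFinset hZf, Nat.card_eq_card_finite_toFinset hZ'f, hcard,
      Finset.sum_mul]
    calc ∑ w ∈ hZ'f.toFinset, ((hZf.toFinset.filter fun z => f z = w).card * (q - 1))
        ≤ ∑ _w ∈ hZ'f.toFinset, (q ^ k - 1) := by
          apply Finset.sum_le_sum
          intro w _
          have hfib := aux_fiber F (Fin n → F) k ℓ p hℓ hp hpℓ
            (↑(hZf.toFinset.filter fun z => f z = w))
            (by
              intro z hz
              simp only [Finset.coe_filter, Set.mem_setOf_eq, Set.Finite.mem_toFinset] at hz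
              exact hZ z hz.1)
            (by
              intro z₁ hz₁ z₂ hz₂
              simp only [Finset.coe_filter, Set.mem_setOf_eq, Set.Finite.mem_toFinset] at hz₁ hz₂
              have h1 : Submodule.comap ℓ.mkQ (f z₁) = z₁ ⊔ ℓ := by
                show Submodule.comap ℓ.mkQ (Submodule.map ℓ.mkQ (z₁ ⊔ ℓ)) = z₁ ⊔ ℓ
                rw [Submodule.comap_map_eq, Submodule.ker_mkQ, sup_assoc, sup_idem]
              have h2 : Submodule.comap ℓ.mkQ (f z₂) = z₂ ⊔ ℓ := by
                show Submodule.comap ℓ.mkQ (Submodule.map ℓ.mkQ (z₂ ⊔ ℓ)) = z₂ ⊔ ℓ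
                rw [Submodule.comap_map_eq, Submodule.ker_mkQ, sup_assoc, sup_idem]
              rw [← h1, ← h2, hz₁.2, hz₂.2])
          rw [Nat.card_coe_set_eq, Set.ncard_coe_finset, hF] at hfib
          exact hfib
      _ = hZ'f.toFinset.card * (q ^ k - 1) := by
          rw [Finset.sum_const, smul_eq_mul]
  -- pass to rationals
  rcases Nat.eq_zero_or_pos k with rfl | hk
  · simp only [pow_zero, sub_self, zero_div, div_zero, ge_iff_le]
    positivity
  have hq1 : (1 : ℚ) < (q : ℚ) := by exact_mod_cast hq2
  have hqk1 : (1 : ℚ) < (q : ℚ) ^ k := one_lt_pow₀ hq1 (by omega)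
  have hd1 : (0 : ℚ) < (q : ℚ) - 1 := by linarith
  have hd2 : (0 : ℚ) < (q : ℚ) ^ k - 1 := by linarith
  have hc : (0 : ℚ) < ((q : ℚ) ^ k - 1) / ((q : ℚ) - 1) := div_pos hd2 hd1
  rw [ge_iff_le, div_le_iff₀ hc]
  have keyQ : (Nat.card Z : ℚ) * ((q : ℚ) - 1) ≤ (Nat.card Z' : ℚ) * ((q : ℚ) ^ k - 1) := by
    have h1 : (1 : ℕ) ≤ q := by omega
    have h2 : (1 : ℕ) ≤ q ^ k := Nat.one_le_pow _ _ (by omega)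
    have h3 := (Nat.cast_le (α := ℚ)).mpr key
    rw [Nat.cast_mul, Nat.cast_mul, Nat.cast_sub h1, Nat.cast_sub h2] at h3
    push_cast at h3
    exact h3
  have hrw : (Nat.card Z' : ℚ) * (((q : ℚ) ^ k - 1) / ((q : ℚ) - 1))
      = (Nat.card Z' : ℚ) * ((q : ℚ) ^ k - 1) / ((q : ℚ) - 1) := by ring
  rw [hrw, le_div_iff₀ hd1]
  exact keyQ
end

section
/- Let Y be an intersecting family of k-dimensional subspaces of F_q^{2k} (every two members of Y have nontrivial intersection), with k ≥ 2. If p is a point (1-dimensional subspace) not contained in some member T of Y, then the number of members of Y containing p is at most [k choose 1]_q · [2k-2 choose k-2]_q. -/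
set_option synthInstance.maxHeartbeats 1000000
set_option maxHeartbeats 1000000


/-- The Gaussian binomial coefficient `[n choose k]_q`. -/
def gaussBinom (q n k : ℕ) : ℚ :=
  ∏ i ∈ Finset.range k, ((q : ℚ) ^ (n - i) - 1) / ((q : ℚ) ^ (i + 1) - 1)

open Module Submodule Finset

section Counting

variable {F V : Type} [Field F] [Fintype F] [AddCommGroup V] [Module F V] [Finite V]

/-- The fiber of the span map over a `j`-dimensional subspace `W` is equivalent to the set of
linearly independent `j`-tuples in `W`. -/
noncomputable def fiberEquiv (j : ℕ) (W : Submodule F V) (hW : finrank F W = j) :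
    {s : {s : Fin j → V // LinearIndependent F s} // span F (Set.range s.1) = W} ≃
      {t : Fin j → W // LinearIndependent F t} where
  toFun s := ⟨fun i => ⟨s.1.1 i, s.2.le (subset_span (Set.mem_range_self i))⟩, by
    exact LinearIndependent.of_comp W.subtype s.1.2⟩
  invFun t := ⟨⟨fun i => (t.1 i : V), t.2.map' W.subtype (ker_subtype W)⟩, by
    haveI : FiniteDimensional F W := Module.Finite.of_finite
    apply Submodule.eq_of_le_of_finrank_le
    · rw [span_le]; rintro _ ⟨i, rfl⟩; exact (t.1 i).2
    · rw [hW]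
      have : finrank F (span F (Set.range fun i => ((t.1 i : V)))) = Fintype.card (Fin j) :=
        finrank_span_eq_card (t.2.map' W.subtype (ker_subtype W))
      simp [this]⟩
  left_inv s := by ext i; rfl
  right_inv t := by ext i; rfl

/-- Counting `j`-dimensional subspaces of a finite vector space, in product form. -/
theorem card_subspaces_mul (j : ℕ) (hj : j ≤ finrank F V) :
    Nat.card {W : Submodule F V // finrank F W = j} *
        ∏ i ∈ range j, (Fintype.card F ^ j - Fintype.card F ^ i) =
      ∏ i ∈ range j, (Fintype.card F ^ finrank F V - Fintype.card F ^ i) := by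
  classical
  haveI : Finite (Submodule F V) := Finite.of_injective _ SetLike.coe_injective
  haveI := Fintype.ofFinite V
  haveI : FiniteDimensional F V := Module.Finite.of_finite
  set f := fun s : {s : Fin j → V // LinearIndependent F s} =>
      (⟨span F (Set.range s.1), by simp [finrank_span_eq_card s.2]⟩ :
        {W : Submodule F V // finrank F W = j}) with hf
  have key : ∀ W : {W : Submodule F V // finrank F W = j},
      Nat.card {s // f s = W} =
      ∏ i ∈ range j, (Fintype.card F ^ j - Fintype.card F ^ i) := by
    intro W
    have e1 : {s // f s = W} ≃
        {s : {s : Fin j → V // LinearIndependent F s} // span F (Set.range s.1) = W.1} :=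
      Equiv.subtypeEquivRight (fun s => by simp [hf, Subtype.ext_iff])
    rw [Nat.card_congr (e1.trans (fiberEquiv j W.1 W.2))]
    rw [card_linearIndependent (by rw [W.2])]
    rw [W.2, ← Fin.prod_univ_eq_prod_range]
  have main := Nat.card_congr (Equiv.sigmaFiberEquiv f)
  rw [card_linearIndependent hj, Nat.card_eq_fintype_card, Fintype.card_sigma] at main
  simp only [← Nat.card_eq_fintype_card, key] at main
  rw [Finset.sum_const, smul_eq_mul, Finset.card_univ, ← Nat.card_eq_fintype_card,
    ← Fin.prod_univ_eq_prod_range] at main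
  rw [← Fin.prod_univ_eq_prod_range, ← Fin.prod_univ_eq_prod_range]
  simpa [Nat.card_eq_fintype_card] using main

/-- The product form of the subspace count equals the Gaussian binomial coefficient. -/
theorem prod_eq_gaussBinom (q d j : ℕ) (hq : 2 ≤ q) (hj : j ≤ d) :
    (∏ i ∈ range j, ((q:ℚ)^d - (q:ℚ)^i)) / (∏ i ∈ range j, ((q:ℚ)^j - (q:ℚ)^i)) =
      gaussBinom q d j := by
  have hq1 : (1:ℚ) < (q:ℚ) := by exact_mod_cast hq
  have hq0 : (0:ℚ) < (q:ℚ) := by linarith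
  have hnum : ∏ i ∈ range j, ((q:ℚ)^d - (q:ℚ)^i) =
      (∏ i ∈ range j, (q:ℚ)^i) * ∏ i ∈ range j, ((q:ℚ)^(d-i) - 1) := by
    rw [← Finset.prod_mul_distrib]
    refine Finset.prod_congr rfl fun i hi => ?_
    have hid : i ≤ d := le_trans (le_of_lt (mem_range.mp hi)) hj
    rw [mul_sub, mul_one, ← pow_add]
    congr 2
    omega
  have hden : ∏ i ∈ range j, ((q:ℚ)^j - (q:ℚ)^i) =
      (∏ i ∈ range j, (q:ℚ)^i) * ∏ i ∈ range j, ((q:ℚ)^(i+1) - 1) := by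
    have h1 : ∏ i ∈ range j, ((q:ℚ)^j - (q:ℚ)^i) =
        (∏ i ∈ range j, (q:ℚ)^i) * ∏ i ∈ range j, ((q:ℚ)^(j-i) - 1) := by
      rw [← Finset.prod_mul_distrib]
      refine Finset.prod_congr rfl fun i hi => ?_
      rw [mul_sub, mul_one, ← pow_add]
      congr 2
      have := mem_range.mp hi; omega
    have h2 : ∏ i ∈ range j, ((q:ℚ)^(j-i) - 1) = ∏ i ∈ range j, ((q:ℚ)^(i+1) - 1) := by
      rw [← Finset.prod_range_reflect (fun i => ((q:ℚ)^(i+1) - 1)) j]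
      refine Finset.prod_congr rfl fun i hi => ?_
      congr 2
      have := mem_range.mp hi; omega
    rw [h1, h2]
  have hP : (∏ i ∈ range j, (q:ℚ)^i) ≠ 0 :=
    Finset.prod_ne_zero_iff.mpr fun i _ => pow_ne_zero _ (ne_of_gt hq0)
  rw [hnum, hden, gaussBinom, Finset.prod_div_distrib, mul_div_mul_left _ _ hP]

/-- The number of `j`-dimensional subspaces of a finite vector space is the Gaussian binomial
coefficient. -/
theorem card_subspaces_q (hq2 : 2 ≤ Fintype.card F) (j : ℕ) (hj : j ≤ finrank F V) :
    (Nat.card {W : Submodule F V // finrank F W = j} : ℚ) =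
      gaussBinom (Fintype.card F) (finrank F V) j := by
  set q := Fintype.card F with hqdef
  set d := finrank F V with hddef
  have key : Nat.card {W : Submodule F V // finrank F W = j} *
        ∏ i ∈ range j, (q ^ j - q ^ i) = ∏ i ∈ range j, (q ^ d - q ^ i) :=
    card_subspaces_mul j hj
  have cast_of : ∀ m : ℕ, j ≤ m → ((∏ i ∈ range j, (q ^ m - q ^ i) : ℕ) : ℚ) =
      ∏ i ∈ range j, ((q:ℚ)^m - (q:ℚ)^i) := by
    intro m hm
    rw [Nat.cast_prod]
    refine Finset.prod_congr rfl fun i hi => ?_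
    rw [Nat.cast_sub (Nat.pow_le_pow_right (by omega) (le_trans (le_of_lt (mem_range.mp hi)) hm))]
    push_cast; ring
  have keyQ : (Nat.card {W : Submodule F V // finrank F W = j} : ℚ) *
      ∏ i ∈ range j, ((q:ℚ)^j - (q:ℚ)^i) = ∏ i ∈ range j, ((q:ℚ)^d - (q:ℚ)^i) := by
    rw [← cast_of j le_rfl, ← cast_of d hj, ← Nat.cast_mul, key]
  have hden : (∏ i ∈ range j, ((q:ℚ)^j - (q:ℚ)^i)) ≠ 0 := by
    refine Finset.prod_ne_zero_iff.mpr fun i hi => ?_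
    have : (q:ℚ)^i < (q:ℚ)^j := by
      apply pow_lt_pow_right₀ (by exact_mod_cast hq2 : (1:ℚ) < q) (mem_range.mp hi)
    linarith
  rw [← prod_eq_gaussBinom q d j hq2 hj, eq_div_iff hden]
  exact keyQ

/-- Subspaces of `T` correspond to subspaces of the ambient space contained in `T`. -/
noncomputable def subspacesOfEquiv (T : Submodule F V) (j : ℕ) :
    {W : Submodule F T // finrank F W = j} ≃
      {P : Submodule F V // finrank F P = j ∧ P ≤ T} where
  toFun W := ⟨Submodule.map T.subtype W.1,
    by rw [Submodule.finrank_map_subtype_eq]; exact W.2, Submodule.map_subtype_le T W.1⟩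
  invFun P := ⟨Submodule.comap T.subtype P.1, by
    have h : Submodule.map T.subtype (Submodule.comap T.subtype P.1) = P.1 := by
      rw [Submodule.map_comap_subtype, inf_eq_right.mpr P.2.2]
    rw [← Submodule.finrank_map_subtype_eq, h]; exact P.2.1⟩
  left_inv W := Subtype.ext (by
    dsimp only
    rw [Submodule.comap_map_eq, Submodule.ker_subtype, sup_bot_eq])
  right_inv P := Subtype.ext (by
    dsimp only
    rw [Submodule.map_comap_subtype, inf_eq_right.mpr P.2.2])

end Counting

/-- If `Y` is an intersecting family of `k`-spaces of `F_q^{2k}` and `p` is a point not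
contained in some member `T` of `Y`, then at most `[k choose 1]_q · [2k-2 choose k-2]_q`
members of `Y` contain `p`. -/
theorem point_not_in_member_bound (q k : ℕ) (hq : IsPrimePow q) (hk : 2 ≤ k)
    (F : Type) [Field F] [Fintype F] (hF : Fintype.card F = q)
    (Y : Set (Submodule F (Fin (2 * k) → F)))
    (hdim : ∀ R ∈ Y, Module.finrank F R = k)
    (hint : ∀ R ∈ Y, ∀ S ∈ Y, R ⊓ S ≠ ⊥)
    (p T : Submodule F (Fin (2 * k) → F))
    (hp : Module.finrank F p = 1) (hT : T ∈ Y) (hpT : ¬ p ≤ T) :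
    (Nat.card {R : Submodule F (Fin (2 * k) → F) // R ∈ Y ∧ p ≤ R} : ℚ) ≤
      gaussBinom q k 1 * gaussBinom q (2 * k - 2) (k - 2) := by
  classical
  have hq2 : 2 ≤ q := hq.two_le
  have hqF : 2 ≤ Fintype.card F := by rw [hF]; exact hq2
  have hdV : finrank F (Fin (2*k) → F) = 2*k := by
    rw [Module.finrank_fintype_fun_eq_card, Fintype.card_fin]
  set A := {R : Submodule F (Fin (2*k) → F) // R ∈ Y ∧ p ≤ R} with hA
  haveI : Finite (Submodule F (Fin (2*k) → F)) := Finite.of_injective _ SetLike.coe_injective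
  haveI : Finite A := Subtype.finite
  have hchoice : ∀ R : A, ∃ w : Fin (2*k) → F, w ∈ R.1 ⊓ T ∧ w ≠ 0 := by
    intro R
    obtain ⟨w, hw, hw0⟩ := Submodule.exists_mem_ne_zero_of_ne_bot (hint R.1 R.2.1 T hT)
    exact ⟨w, hw, hw0⟩
  choose v hv hv0 using hchoice
  set PT := {P : Submodule F (Fin (2*k) → F) // finrank F P = 1 ∧ P ≤ T} with hPT
  haveI : Finite PT := Subtype.finite
  haveI := Fintype.ofFinite A
  haveI := Fintype.ofFinite PT
  have hTk : finrank F T = k := hdim T hT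
  have fdef : ∀ R : A, finrank F (span F {v R}) = 1 ∧ span F {v R} ≤ T := by
    intro R
    refine ⟨finrank_span_singleton (hv0 R), ?_⟩
    rw [Submodule.span_singleton_le_iff_mem]
    exact ((hv R)).2
  set f : A → PT := fun R => ⟨span F {v R}, fdef R⟩ with hfdef
  have fiber_bound : ∀ P : PT,
      (Nat.card {R : A // f R = P} : ℚ) ≤ gaussBinom q (2*k-2) (k-2) := by
    intro P
    set Wp := p ⊔ P.1 with hWp
    have hne : ¬ P.1 ≤ p := by
      intro hle
      have heq : P.1 = p := Submodule.eq_of_le_of_finrank_le hle (by rw [hp, P.2.1])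
      exact hpT (le_trans (le_of_eq heq.symm) P.2.2)
    have hinf : finrank F (p ⊓ P.1 : Submodule F (Fin (2*k) → F)) = 0 := by
      by_contra h
      have h1 : finrank F (p ⊓ P.1 : Submodule F (Fin (2*k) → F)) ≤ 1 := by
        have := Submodule.finrank_mono (inf_le_right : p ⊓ P.1 ≤ P.1)
        rw [P.2.1] at this; exact this
      have h2 : finrank F (p ⊓ P.1 : Submodule F (Fin (2*k) → F)) = 1 := by omega
      have h3 : p ⊓ P.1 = P.1 :=
        Submodule.eq_of_le_of_finrank_le inf_le_right (by rw [P.2.1, h2])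
      exact hne (by rw [← h3]; exact inf_le_left)
    have hW2 : finrank F Wp = 2 := by
      have := Submodule.finrank_sup_add_finrank_inf_eq p P.1
      rw [hp, P.2.1, hinf] at this
      rw [hWp]; omega
    have hquot : finrank F ((Fin (2*k) → F) ⧸ Wp) = 2*k - 2 := by
      have := Submodule.finrank_quotient_add_finrank Wp
      rw [hW2, hdV] at this; omega
    haveI : Finite ((Fin (2*k) → F) ⧸ Wp) :=
      Finite.of_surjective _ (Submodule.mkQ_surjective Wp)
    haveI : Finite (Submodule F ((Fin (2*k) → F) ⧸ Wp)) :=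
      Finite.of_injective _ SetLike.coe_injective
    have hWpR : ∀ R : {R : A // f R = P}, Wp ≤ R.1.1 := by
      intro R
      apply sup_le R.1.2.2
      have hsp : span F {v R.1} = P.1 := congrArg Subtype.val R.2
      rw [← hsp, Submodule.span_singleton_le_iff_mem]
      exact (hv R.1).1
    have gdim : ∀ R : {R : A // f R = P},
        finrank F (Submodule.map Wp.mkQ R.1.1) = k - 2 := by
      intro R
      have h1 := LinearMap.finrank_range_add_finrank_ker (Wp.mkQ ∘ₗ R.1.1.subtype)
      rw [LinearMap.range_comp, Submodule.range_subtype, LinearMap.ker_comp,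
        Submodule.ker_mkQ] at h1
      have h2 : finrank F (Submodule.comap R.1.1.subtype Wp) = 2 := by
        rw [LinearEquiv.finrank_eq (Submodule.comapSubtypeEquivOfLe (hWpR R))]; exact hW2
      rw [h2, hdim R.1.1 R.1.2.1] at h1
      omega
    set g : {R : A // f R = P} →
        {W' : Submodule F ((Fin (2*k) → F) ⧸ Wp) // finrank F W' = k - 2} :=
      fun R => ⟨Submodule.map Wp.mkQ R.1.1, gdim R⟩ with hg
    have ginj : Function.Injective g := by
      intro R1 R2 hEq
      have hmap : Submodule.map Wp.mkQ R1.1.1 = Submodule.map Wp.mkQ R2.1.1 := by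
        simpa [hg, Subtype.ext_iff] using hEq
      have e1 := congrArg (Submodule.comap Wp.mkQ) hmap
      rw [Submodule.comap_map_mkQ, Submodule.comap_map_mkQ,
        sup_eq_right.mpr (hWpR R1), sup_eq_right.mpr (hWpR R2)] at e1
      exact Subtype.ext (Subtype.ext e1)
    have hle := Nat.card_le_card_of_injective g ginj
    calc (Nat.card {R : A // f R = P} : ℚ)
        ≤ (Nat.card {W' : Submodule F ((Fin (2*k) → F) ⧸ Wp) // finrank F W' = k - 2} : ℚ) := by
          exact_mod_cast hle
      _ = gaussBinom (Fintype.card F) (finrank F ((Fin (2*k) → F) ⧸ Wp)) (k-2) :=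
          card_subspaces_q hqF (k-2) (by rw [hquot]; omega)
      _ = gaussBinom q (2*k-2) (k-2) := by rw [hF, hquot]
  have hPTcard : (Nat.card PT : ℚ) = gaussBinom q k 1 := by
    rw [Nat.card_congr (subspacesOfEquiv T 1).symm]
    rw [card_subspaces_q hqF 1 (by rw [hTk]; omega), hF, hTk]
  have main2 : ∑ P : PT, Nat.card {R : A // f R = P} = Nat.card A := by
    rw [← Nat.card_congr (Equiv.sigmaFiberEquiv f), Nat.card_eq_fintype_card,
      Fintype.card_sigma]
    simp [Nat.card_eq_fintype_card]
  have castsum : (Nat.card A : ℚ) = ∑ P : PT, (Nat.card {R : A // f R = P} : ℚ) := by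
    rw [← main2]; push_cast; rfl
  calc (Nat.card A : ℚ)
      = ∑ P : PT, (Nat.card {R : A // f R = P} : ℚ) := castsum
    _ ≤ ∑ _P : PT, gaussBinom q (2*k-2) (k-2) :=
        Finset.sum_le_sum (fun P _ => fiber_bound P)
    _ = (Nat.card PT : ℚ) * gaussBinom q (2*k-2) (k-2) := by
        rw [Finset.sum_const, Nat.card_eq_fintype_card, Finset.card_univ, nsmul_eq_mul]
    _ = gaussBinom q k 1 * gaussBinom q (2*k-2) (k-2) := by rw [hPTcard]
end

section
/- Let (X, {R_0,...,R_k}) be a symmetric association scheme with v = |X|, adjacency matrices A_i, and common eigenspaces V_0 = span of the all-ones vector, V_1, ..., V_k, with eigenvalues A_i E_j = P_{ji} E_j where E_j is the orthogonal projection onto V_j. Let χ be the characteristic vector of an independent set of size y in the graph (X, R_i). Assume P_{1i} is the smallest eigenvalue of A_i and P^- is the second smallest eigenvalue, and let E_r be the orthogonal projection onto the sum of all eigenspaces other than V_0 and the eigenspace of P_{1i}. Then (P^- - P_{1i}) · χ^T E_r χ ≤ y · (−P_{1i} − (P_{0i} − P_{1i}) · y / v). -/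
/-!
Expand the indicator vector `χ` of `S` along the spectral projections: with `a j = χᵀ E_j χ ≥ 0`
we have `∑ a j = |S|`, `a 0 = |S|² / v`, and independence gives `∑ P_j a_j = χᵀ A χ = 0`.
Hence `∑_{j ≠ 0} (P_j - P_1) a_j = -P_1 |S| - (P_0 - P_1) a_0`; every summand is nonnegative,
and those outside the eigenspace of `P_1` carry a factor at least `P⁻ - P_1`.
-/

open Matrix Finset

namespace Matrix

variable {n : Type*} [Fintype n]

lemma dotProduct_sum_mulVec {α ι : Type*} [CommSemiring α] (s : Finset ι)
    (M : ι → Matrix n n α) (x y : n → α) :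
    x ⬝ᵥ (∑ j ∈ s, M j) *ᵥ y = ∑ j ∈ s, x ⬝ᵥ M j *ᵥ y := by
  rw [sum_mulVec, dotProduct_sum]

lemma PosSemidef.of_isHermitian_of_isIdempotentElem {R : Type*} [CommRing R] [PartialOrder R]
    [StarRing R] [StarOrderedRing R] {E : Matrix n n R} (hE : E.IsHermitian)
    (hE' : IsIdempotentElem E) : E.PosSemidef := by
  simpa only [hE.eq, hE'.eq] using posSemidef_conjTranspose_mul_self E

lemma dotProduct_mulVec_nonneg_of_isSymm_of_mul_self {E : Matrix n n ℝ} (hE : E.IsSymm)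
    (hE' : E * E = E) (x : n → ℝ) : 0 ≤ x ⬝ᵥ E *ᵥ x := by
  have hEherm : E.IsHermitian := by
    rw [IsHermitian, conjTranspose_eq_transpose_of_trivial, hE.eq]
  simpa using (PosSemidef.of_isHermitian_of_isIdempotentElem hEherm hE').dotProduct_mulVec_nonneg x

lemma dotProduct_smul_ones_mulVec (c : ℝ) (x : n → ℝ) :
    x ⬝ᵥ (c • of fun _ _ => (1 : ℝ)) *ᵥ x = c * (∑ i, x i) ^ 2 := by
  simp only [dotProduct, mulVec, smul_apply, of_apply, smul_eq_mul, mul_one]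
  rw [← mul_sum, ← sum_mul]
  ring

lemma dotProduct_mulVec_eq_sum_mul_of_spectral {ι : Type*} [Fintype ι] [DecidableEq n]
    {A : Matrix n n ℝ} {E : ι → Matrix n n ℝ} {P : ι → ℝ}
    (hEsum : ∑ j, E j = 1) (heig : ∀ j, A * E j = P j • E j) (x : n → ℝ) :
    x ⬝ᵥ A *ᵥ x = ∑ j, P j * (x ⬝ᵥ E j *ᵥ x) := by
  calc x ⬝ᵥ A *ᵥ x = x ⬝ᵥ (∑ j, A * E j) *ᵥ x := by rw [← Matrix.mul_sum, hEsum, mul_one]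
    _ = ∑ j, P j * (x ⬝ᵥ E j *ᵥ x) := by
      simp only [heig, dotProduct_sum_mulVec, smul_mulVec, dotProduct_smul, smul_eq_mul]

end Matrix

section Indicator

variable {n : Type*} [Fintype n] [DecidableEq n] (S : Finset n)

lemma indicator_dotProduct_indicator :
    (fun x => if x ∈ S then (1 : ℝ) else 0) ⬝ᵥ (fun x => if x ∈ S then 1 else 0) = S.card := by
  simp [dotProduct]

lemma indicator_dotProduct_mulVec_indicator_eq_zero {A : Matrix n n ℝ}
    (hA : ∀ x ∈ S, ∀ y ∈ S, A x y = 0) :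
    (fun x => if x ∈ S then (1 : ℝ) else 0) ⬝ᵥ A *ᵥ (fun x => if x ∈ S then 1 else 0) = 0 := by
  simp only [dotProduct, mulVec, ite_mul, one_mul, zero_mul, mul_ite, mul_one, mul_zero,
    sum_ite_mem, univ_inter]
  exact sum_eq_zero fun x hx => sum_eq_zero fun y hy => hA x hx y hy

end Indicator

lemma hoffman_stability_weights {ι : Type*} [Fintype ι] [DecidableEq ι] (P a : ι → ℝ)
    (i₀ i₁ : ι) (Pm : ℝ) (ha : ∀ j, 0 ≤ a j) (hPa : ∑ j, P j * a j = 0)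
    (hmin : ∀ j, j ≠ i₀ → P i₁ ≤ P j) (hsecond : ∀ j, j ≠ i₀ → P j ≠ P i₁ → Pm ≤ P j) :
    (Pm - P i₁) * ∑ j ∈ univ.filter (fun j => j ≠ i₀ ∧ P j ≠ P i₁), a j ≤
      -P i₁ * ∑ j, a j - (P i₀ - P i₁) * a i₀ := by
  set T := univ.filter (fun j => j ≠ i₀ ∧ P j ≠ P i₁)
  have hshift : ∑ j, (P j - P i₁) * a j = -P i₁ * ∑ j, a j := by
    simp only [sub_mul, sum_sub_distrib, hPa, ← mul_sum]; ring
  have hsplit : ∑ j, (P j - P i₁) * a j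
      = (P i₀ - P i₁) * a i₀ + ∑ j ∈ univ.erase i₀, (P j - P i₁) * a j :=
    (add_sum_erase _ _ (mem_univ i₀)).symm
  have hgap : (Pm - P i₁) * ∑ j ∈ T, a j ≤ ∑ j ∈ T, (P j - P i₁) * a j := by
    rw [mul_sum]
    refine sum_le_sum fun j hj => ?_
    obtain ⟨hj₀, hj₁⟩ := (mem_filter.mp hj).2
    exact mul_le_mul_of_nonneg_right (sub_le_sub_right (hsecond j hj₀ hj₁) _) (ha j)
  have hdrop : ∑ j ∈ T, (P j - P i₁) * a j ≤ ∑ j ∈ univ.erase i₀, (P j - P i₁) * a j := by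
    refine sum_le_sum_of_subset_of_nonneg (fun j hj => ?_) fun j hj _ => ?_
    · exact mem_erase.mpr ⟨(mem_filter.mp hj).2.1, mem_univ j⟩
    · exact mul_nonneg (sub_nonneg.mpr (hmin j (mem_erase.mp hj).1)) (ha j)
  linarith

theorem hoffman_stability_general {X : Type} [Fintype X] [DecidableEq X] (k : ℕ)
    (A : Matrix X X ℝ)
    (P : Fin (k + 1) → ℝ) (E : Fin (k + 1) → Matrix X X ℝ)
    (hEsymm : ∀ j, (E j).IsSymm)
    (hEidem : ∀ j, E j * E j = E j)
    (hEsum : ∑ j, E j = 1)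
    (hE0 : E 0 = (Fintype.card X : ℝ)⁻¹ • Matrix.of (fun _ _ => (1 : ℝ)))
    (heig : ∀ j, A * E j = P j • E j)
    (hmin : ∀ j, j ≠ 0 → P 1 ≤ P j)
    (Pm : ℝ)
    (hsecond : ∀ j, j ≠ 0 → P j ≠ P 1 → Pm ≤ P j)
    (Er : Matrix X X ℝ)
    (hEr : Er = ∑ j ∈ Finset.univ.filter (fun j => j ≠ 0 ∧ P j ≠ P 1), E j)
    (S : Finset X)
    (hind : ∀ x ∈ S, ∀ y ∈ S, A x y = 0)
    (χ : X → ℝ) (hχ : χ = fun x => if x ∈ S then 1 else 0) :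
    (Pm - P 1) * (χ ⬝ᵥ Er.mulVec χ) ≤
      (S.card : ℝ) * (-(P 1) - (P 0 - P 1) * (S.card : ℝ) / (Fintype.card X : ℝ)) := by
  set a : Fin (k + 1) → ℝ := fun j => χ ⬝ᵥ E j *ᵥ χ
  have ha : ∀ j, 0 ≤ a j := fun j =>
    dotProduct_mulVec_nonneg_of_isSymm_of_mul_self (hEsymm j) (hEidem j) χ
  have ha_sum : ∑ j, a j = S.card := by
    rw [← dotProduct_sum_mulVec, hEsum, one_mulVec, hχ, indicator_dotProduct_indicator]
  have ha₀ : a 0 = (Fintype.card X : ℝ)⁻¹ * S.card ^ 2 := by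
    simp only [a, hE0, dotProduct_smul_ones_mulVec, hχ, sum_boole, filter_mem_eq_inter,
      univ_inter]
  have hPa : ∑ j, P j * a j = 0 := by
    rw [← dotProduct_mulVec_eq_sum_mul_of_spectral hEsum heig, hχ,
      indicator_dotProduct_mulVec_indicator_eq_zero S hind]
  have hχEr : χ ⬝ᵥ Er *ᵥ χ = ∑ j ∈ univ.filter (fun j => j ≠ 0 ∧ P j ≠ P 1), a j := by
    rw [hEr, dotProduct_sum_mulVec]
  rw [hχEr]
  calc _ ≤ -P 1 * ∑ j, a j - (P 0 - P 1) * a 0 :=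
        hoffman_stability_weights P a 0 1 Pm ha hPa hmin hsecond
    _ = _ := by rw [ha_sum, ha₀]; ring

/-- Stability version of Hoffman's bound (Lemma 2.2): for an independent set `S` of the
graph `(X, R_i)` of a symmetric association scheme, with `P 1` the smallest eigenvalue of
the adjacency matrix `A` (of relation `R_i`), `Pm` the second smallest eigenvalue, and `Er`
the projection onto the eigenspaces orthogonal to the all-ones vector and to the eigenspace
of `P 1`, we have
`(Pm - P 1) · χᵀ Er χ ≤ |S| · (-P 1 - (P 0 - P 1)·|S|/v)`. -/
theorem hoffman_stability {X : Type} [Fintype X] [DecidableEq X] (k : ℕ)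
    (A : Matrix X X ℝ) (hA : A.IsSymm)
    (P : Fin (k + 1) → ℝ) (E : Fin (k + 1) → Matrix X X ℝ)
    (hEsymm : ∀ j, (E j).IsSymm)
    (hEidem : ∀ j, E j * E j = E j)
    (hEorth : ∀ i j, i ≠ j → E i * E j = 0)
    (hEsum : ∑ j, E j = 1)
    (hE0 : E 0 = (Fintype.card X : ℝ)⁻¹ • Matrix.of (fun _ _ => (1 : ℝ)))
    (heig : ∀ j, A * E j = P j • E j)
    (hmin : ∀ j, j ≠ 0 → P 1 ≤ P j)
    (Pm : ℝ)
    (hPm : P 1 ≤ Pm)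
    (hsecond : ∀ j, j ≠ 0 → P j ≠ P 1 → Pm ≤ P j)
    (Er : Matrix X X ℝ)
    (hEr : Er = ∑ j ∈ Finset.univ.filter (fun j => j ≠ 0 ∧ P j ≠ P 1), E j)
    (S : Finset X)
    (hind : ∀ x ∈ S, ∀ y ∈ S, A x y = 0)
    (χ : X → ℝ) (hχ : χ = fun x => if x ∈ S then 1 else 0) :
    (Pm - P 1) * (χ ⬝ᵥ Er.mulVec χ) ≤
      (S.card : ℝ) * (-(P 1) - (P 0 - P 1) * (S.card : ℝ) / (Fintype.card X : ℝ)) :=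
  hoffman_stability_general k A P E hEsymm hEidem hEsum hE0 heig hmin Pm hsecond Er hEr S hind χ hχ
end

section
/- Let (X, {R_0,...,R_k}) be a symmetric association scheme with v = |X|, and let χ be the characteristic vector of a non-empty subset Y of X with y = |Y|. Let E_r be the orthogonal projection onto the sum of the eigenspaces V_2, ..., V_k (orthogonal to span(j) + V_1), and let P^- be the smallest eigenvalue of A_i. Then there exists T ∈ Y such that the number of elements of Y in relation R_i to T is at least (P_{0i} − P_{1i})·y/v + P_{1i} + (P^- − P_{1i})·(χ^T E_r χ)/y. -/
open Matrix

private lemma aux_sum_mulVec {X : Type} [Fintype X] {ι : Type} (s : Finset ι)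
    (M : ι → Matrix X X ℝ) (v : X → ℝ) :
    (∑ j ∈ s, M j) *ᵥ v = ∑ j ∈ s, (M j *ᵥ v) := by
  funext x
  simp only [Matrix.mulVec, dotProduct, Matrix.sum_apply, Finset.sum_apply, Finset.sum_mul]
  rw [Finset.sum_comm]

private lemma aux_dot_sum {X : Type} [Fintype X] {ι : Type} (s : Finset ι)
    (w : ι → X → ℝ) (v : X → ℝ) :
    v ⬝ᵥ (∑ j ∈ s, w j) = ∑ j ∈ s, v ⬝ᵥ w j := by
  simp only [dotProduct, Finset.sum_apply, Finset.mul_sum]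
  rw [Finset.sum_comm]

/-- Lemma 2.3: in a symmetric association scheme, for a non-empty subset `Y` of `X` with
characteristic vector `χ`, there is `T ∈ Y` such that the number of elements of `Y` in
relation `R_i` to `T` is at least
`(P 0 - P 1)·|Y|/v + P 1 + (Pm - P 1)·(χᵀ Er χ)/|Y|`,
where `Pm` is the smallest eigenvalue of `A_i` and `Er` projects onto `V_2 + ⋯ + V_k`. -/
theorem averaging_relation_bound {X : Type} [Fintype X] [DecidableEq X] (k : ℕ)
    (A : Matrix X X ℝ) (hA : A.IsSymm)
    (h01 : ∀ x y, A x y = 0 ∨ A x y = 1)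
    (P : Fin (k + 1) → ℝ) (E : Fin (k + 1) → Matrix X X ℝ)
    (hEsymm : ∀ j, (E j).IsSymm)
    (hEidem : ∀ j, E j * E j = E j)
    (hEorth : ∀ i j, i ≠ j → E i * E j = 0)
    (hEsum : ∑ j, E j = 1)
    (hE0 : E 0 = (Fintype.card X : ℝ)⁻¹ • Matrix.of (fun _ _ => (1 : ℝ)))
    (heig : ∀ j, A * E j = P j • E j)
    (Pm : ℝ) (hPm : ∀ j, Pm ≤ P j)
    (Er : Matrix X X ℝ)
    (hEr : Er = ∑ j ∈ Finset.univ.filter (fun j => j ≠ 0 ∧ j ≠ 1), E j)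
    (Y : Finset X) (hY : Y.Nonempty)
    (χ : X → ℝ) (hχ : χ = fun x => if x ∈ Y then 1 else 0) :
    ∃ T ∈ Y, ((Y.filter (fun x => A T x = 1)).card : ℝ) ≥
      (P 0 - P 1) * (Y.card : ℝ) / (Fintype.card X : ℝ) + P 1 +
        (Pm - P 1) * (χ ⬝ᵥ Er.mulVec χ) / (Y.card : ℝ) := by
  classical
  obtain ⟨x0, hx0⟩ := hY
  have hXcard : 0 < Fintype.card X := Fintype.card_pos_iff.mpr ⟨x0⟩
  have hv : (0:ℝ) < (Fintype.card X : ℝ) := by exact_mod_cast hXcard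
  have hy : (0:ℝ) < (Y.card : ℝ) := by
    exact_mod_cast Finset.card_pos.mpr ⟨x0, hx0⟩
  set q : Fin (k+1) → ℝ := fun j => χ ⬝ᵥ (E j) *ᵥ χ with hqdef
  -- dot product with χ equals sum over Y
  have hdot : ∀ w : X → ℝ, χ ⬝ᵥ w = ∑ x ∈ Y, w x := by
    intro w
    simp [hχ, dotProduct, ite_mul, one_mul, zero_mul]
  -- cardinality of the filter as a sum
  have hcount : ∀ T : X, ((Y.filter (fun x => A T x = 1)).card : ℝ) = ∑ x ∈ Y, A T x := by
    intro T
    rw [Finset.card_filter]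
    push_cast
    refine Finset.sum_congr rfl fun x hx => ?_
    rcases h01 T x with h | h <;> simp [h]
  -- quadratic form of A equals sum over Y × Y
  have hsum_count : ∑ T ∈ Y, ∑ x ∈ Y, A T x = χ ⬝ᵥ A *ᵥ χ := by
    rw [hdot]
    refine Finset.sum_congr rfl fun T hT => ?_
    rw [show (A *ᵥ χ) T = (A T) ⬝ᵥ χ from rfl, dotProduct_comm, hdot]
  -- spectral decomposition of A
  have hAdec : A = ∑ j, P j • E j := by
    calc A = A * ∑ j, E j := by rw [hEsum, mul_one]
    _ = ∑ j, A * E j := Finset.mul_sum _ _ _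
    _ = ∑ j, P j • E j := Finset.sum_congr rfl fun j _ => heig j
  have hχAχ : χ ⬝ᵥ A *ᵥ χ = ∑ j, P j * q j := by
    conv_lhs => rw [hAdec]
    rw [aux_sum_mulVec, aux_dot_sum]
    refine Finset.sum_congr rfl fun j _ => ?_
    rw [Matrix.smul_mulVec, dotProduct_smul, smul_eq_mul]
  -- nonnegativity of the q j
  have hqnn : ∀ j, 0 ≤ q j := by
    intro j
    have h1 : E j = (E j)ᵀ * E j := by rw [hEsymm j, hEidem j]
    have h2 : q j = (E j *ᵥ χ) ⬝ᵥ (E j *ᵥ χ) := by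
      show χ ⬝ᵥ (E j) *ᵥ χ = _
      conv_lhs => rw [h1]
      rw [← Matrix.mulVec_mulVec, Matrix.dotProduct_mulVec, Matrix.vecMul_transpose]
    rw [h2]
    exact Finset.sum_nonneg fun i _ => mul_self_nonneg _
  -- sum of all q j
  have hsumq : ∑ j, q j = (Y.card : ℝ) := by
    have : ∑ j, q j = χ ⬝ᵥ (∑ j, E j) *ᵥ χ := by
      rw [aux_sum_mulVec, aux_dot_sum]
    rw [this, hEsum, Matrix.one_mulVec, hdot]
    simp [hχ]
  -- value of q 0
  have hJ : (Matrix.of (fun _ _ => (1:ℝ)) : Matrix X X ℝ) *ᵥ χ = fun _ => (Y.card:ℝ) := by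
    funext x
    simp [Matrix.mulVec, dotProduct, hχ]
  have hq0 : q 0 = (Y.card:ℝ) * (Y.card:ℝ) / (Fintype.card X:ℝ) := by
    show χ ⬝ᵥ (E 0) *ᵥ χ = _
    rw [hE0, Matrix.smul_mulVec, hJ, hdot]
    simp only [Pi.smul_apply, smul_eq_mul, Finset.sum_const, nsmul_eq_mul]
    field_simp
  -- value of s
  set s : ℝ := χ ⬝ᵥ Er *ᵥ χ with hsdef
  have hsS : s = ∑ j ∈ Finset.univ.filter (fun j : Fin (k+1) => j ≠ 0 ∧ j ≠ 1), q j := by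
    rw [hsdef, hEr, aux_sum_mulVec, aux_dot_sum]
  by_cases h10 : (1 : Fin (k+1)) = 0
  · -- degenerate case k = 0
    have hk : k = 0 := by
      have := (Fin.one_eq_zero_iff).mp h10
      omega
    subst hk
    have hE1 : E 0 = 1 := by
      have := hEsum
      rwa [Fin.sum_univ_one] at this
    have hcard : Fintype.card X = 1 := by
      by_contra hne
      have h2 : 1 < Fintype.card X := by omega
      obtain ⟨x1, x2, hx12⟩ := Fintype.exists_pair_of_one_lt_card h2
      have h3 := congrFun (congrFun (hE1.symm.trans hE0) x1) x2
      rw [Matrix.one_apply_ne hx12] at h3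
      simp only [Matrix.smul_apply, Matrix.of_apply, smul_eq_mul, mul_one] at h3
      have : ((Fintype.card X : ℝ))⁻¹ ≠ 0 := by positivity
      exact this h3.symm
    have hYcard : Y.card = 1 := by
      have h1 : Y.card ≤ 1 := by
        have := Finset.card_le_univ Y
        simpa [hcard] using this
      have h2 : 1 ≤ Y.card := Finset.card_pos.mpr ⟨x0, hx0⟩
      omega
    obtain ⟨t, ht⟩ := Finset.card_eq_one.mp hYcard
    have hEr0 : Er = 0 := by
      rw [hEr]
      have : (Finset.univ.filter (fun j : Fin 1 => j ≠ 0 ∧ j ≠ 1)) = ∅ := by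
        ext j
        simp [Subsingleton.elim j 0]
      rw [this, Finset.sum_empty]
    have hs0 : s = 0 := by
      rw [hsdef, hEr0]
      simp
    have hAeq : A = P 0 • (1 : Matrix X X ℝ) := by
      have := heig 0
      rwa [hE1, mul_one] at this
    have hAtt : A t t = P 0 := by
      rw [hAeq]
      simp [Matrix.one_apply_eq]
    refine ⟨t, by simp [ht], ?_⟩
    rw [hs0, h10]
    have hcast : ((Fintype.card X : ℝ)) = 1 := by rw [hcard]; norm_num
    have hYc : ((Y.card : ℝ)) = 1 := by rw [hYcard]; norm_num
    rw [hcast, hYc]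
    have hgoal : (P 0 - P 0) * 1 / 1 + P 0 + (Pm - P 0) * 0 / 1 = P 0 := by ring
    rw [hgoal]
    rcases h01 t t with h | h
    · rw [h] at hAtt
      rw [← hAtt]
      positivity
    · rw [h] at hAtt
      rw [← hAtt]
      have : Y.filter (fun x => A t x = 1) = {t} := by
        rw [ht]
        ext x
        simp only [Finset.mem_filter, Finset.mem_singleton]
        constructor
        · rintro ⟨hx, _⟩; exact hx
        · rintro rfl; exact ⟨rfl, h⟩
      rw [this]
      norm_num
  · -- main case : 1 ≠ 0 in Fin (k+1)
    set S := Finset.univ.filter (fun j : Fin (k+1) => j ≠ 0 ∧ j ≠ 1) with hSdef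
    have hcompl : Finset.univ.filter (fun j : Fin (k+1) => ¬(j ≠ 0 ∧ j ≠ 1)) = {0, 1} := by
      ext j
      simp [not_and_or, or_comm, em]
      tauto
    have hsplit : ∀ f : Fin (k+1) → ℝ, ∑ j, f j = f 0 + f 1 + ∑ j ∈ S, f j := by
      intro f
      rw [← Finset.sum_filter_add_sum_filter_not Finset.univ
        (fun j : Fin (k+1) => j ≠ 0 ∧ j ≠ 1) f, hcompl,
        Finset.sum_pair (Ne.symm h10)]
      ring
    have hq1 : q 1 = (Y.card : ℝ) - q 0 - s := by
      have := hsplit q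
      rw [hsumq] at this
      rw [hsS]
      linarith
    have hPmS : Pm * s ≤ ∑ j ∈ S, P j * q j := by
      rw [hsS, Finset.mul_sum]
      exact Finset.sum_le_sum fun j _ => mul_le_mul_of_nonneg_right (hPm j) (hqnn j)
    set c : ℝ := (P 0 - P 1) * (Y.card : ℝ) / (Fintype.card X : ℝ) + P 1 +
        (Pm - P 1) * (χ ⬝ᵥ Er.mulVec χ) / (Y.card : ℝ) with hcdef
    have hyc : (Y.card : ℝ) * c = P 0 * q 0 + P 1 * ((Y.card : ℝ) - q 0 - s) + Pm * s := by
      rw [hcdef, hq0]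
      show (Y.card : ℝ) * (_ + _ + (Pm - P 1) * s / (Y.card : ℝ)) = _
      field_simp
      ring
    have key : (Y.card : ℝ) * c ≤ ∑ T ∈ Y, ((Y.filter (fun x => A T x = 1)).card : ℝ) := by
      have h2 : ∑ T ∈ Y, ((Y.filter (fun x => A T x = 1)).card : ℝ) = ∑ j, P j * q j := by
        simp_rw [hcount]
        rw [hsum_count, hχAχ]
      rw [h2, hsplit (fun j => P j * q j), hyc, hq1]
      linarith [hPmS]
    have key2 : ∑ _T ∈ Y, c ≤ ∑ T ∈ Y, ((Y.filter (fun x => A T x = 1)).card : ℝ) := by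
      rw [Finset.sum_const, nsmul_eq_mul]
      exact key
    obtain ⟨T, hT, hTc⟩ := Finset.exists_le_of_sum_le ⟨x0, hx0⟩ key2
    exact ⟨T, hT, hTc⟩
end

section
/- For integers q ≥ 3 and k ≥ 4, with y = (1 + 3/q)·[k choose 1]_q·[2k−2 choose k−2]_q and v = [2k choose k]_q, the quantity (q^{k(k−1)} − q^{k^2}(1 + q^{−k})·y/v) / (q^{k(k−1)}(1 − q^{−2k+3})) is at most 1 − 1/q − 4/q^2. -/
lemma gaussBinom_one (q n : ℕ) : gaussBinom q n 1 = ((q : ℚ) ^ n - 1) / (q - 1) := by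
  simp [gaussBinom]

lemma cast_pow_sub_one_ne_zero {q : ℕ} (hq : q ≠ 1) {j : ℕ} (hj : j ≠ 0) :
    (q : ℚ) ^ j - 1 ≠ 0 := by
  rw [sub_ne_zero, ne_eq, pow_eq_one_iff_of_nonneg (Nat.cast_nonneg q) hj]
  exact_mod_cast hq

lemma gaussBinom_ne_zero {q n k : ℕ} (hq : q ≠ 1) (hkn : k ≤ n) : gaussBinom q n k ≠ 0 :=
  Finset.prod_ne_zero_iff.2 fun i hi => div_ne_zero
    (cast_pow_sub_one_ne_zero hq (by grind))
    (cast_pow_sub_one_ne_zero hq i.succ_ne_zero)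

lemma gaussBinom_succ_succ_mul {q : ℕ} (hq : q ≠ 1) (n k : ℕ) :
    gaussBinom q (n + 1) (k + 1) * ((q : ℚ) ^ (k + 1) - 1) =
      gaussBinom q n k * ((q : ℚ) ^ (n + 1) - 1) := by
  simp only [gaussBinom, Finset.prod_div_distrib]
  rw [Finset.prod_range_succ', Finset.prod_range_succ (fun i => (q : ℚ) ^ (i + 1) - 1)]
  simp only [Nat.add_sub_add_right, Nat.sub_zero]
  have hden : ∏ i ∈ Finset.range k, ((q : ℚ) ^ (i + 1) - 1) ≠ 0 :=
    Finset.prod_ne_zero_iff.2 fun i _ => cast_pow_sub_one_ne_zero hq i.succ_ne_zero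
  field_simp [cast_pow_sub_one_ne_zero hq k.succ_ne_zero]

lemma gaussBinom_two_mul_add_four_mul {q : ℕ} (hq : q ≠ 1) (m : ℕ) :
    gaussBinom q (2 * m + 4) (m + 2) * (((q : ℚ) ^ (m + 2) - 1) * ((q : ℚ) ^ (m + 1) - 1)) =
      gaussBinom q (2 * m + 2) m * (((q : ℚ) ^ (2 * m + 4) - 1) * ((q : ℚ) ^ (2 * m + 3) - 1)) := by
  have h1 := gaussBinom_succ_succ_mul hq (2 * m + 3) (m + 1)
  have h2 := gaussBinom_succ_succ_mul hq (2 * m + 2) m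
  linear_combination ((q : ℚ) ^ (m + 1) - 1) * h1 + ((q : ℚ) ^ (2 * m + 4) - 1) * h2

lemma pow_add_one_mul_gaussBinom_div {q : ℕ} (hq : 1 < q) (m : ℕ) :
    ((q : ℚ) ^ (m + 2) + 1) * gaussBinom q (m + 2) 1 * gaussBinom q (2 * m + 2) m /
        gaussBinom q (2 * m + 4) (m + 2) =
      ((q : ℚ) ^ (m + 2) - 1) * ((q : ℚ) ^ (m + 2) - q) /
        ((q - 1) * (((q : ℚ) ^ (m + 2)) ^ 2 - q)) := by
  have hrec := gaussBinom_two_mul_add_four_mul hq.ne' m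
  have hden : gaussBinom q (2 * m + 4) (m + 2) ≠ 0 := gaussBinom_ne_zero hq.ne' (by omega)
  have hQ : (1 : ℚ) < q := by exact_mod_cast hq
  have hXQ : (0 : ℚ) < ((q : ℚ) ^ (m + 2)) ^ 2 - q := by
    nlinarith [pow_le_pow_right₀ hQ.le (show 1 ≤ m + 2 by omega)]
  rw [div_eq_div_iff hden (mul_pos (sub_pos.2 hQ) hXQ).ne', gaussBinom_one]
  field_simp [(sub_pos.2 hQ).ne']
  linear_combination (-(q : ℚ)) * hrec

/- The difference of the two sides is `X² · B + Q⁴ (Q³ - 2Q² - 3Q + 4)`, where the quadratic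
`B` in `X` below has leading coefficient `4` and is nonnegative once `X ≥ Q³`. -/
lemma lemma37_cleared_ineq (Q X : ℚ) (hQ : 3 ≤ Q) (hX : Q ^ 3 ≤ X) :
    (Q * (Q - 1) * (X ^ 2 - Q) - (Q + 3) * (X - 1) * (X - Q)) * X ^ 2 * Q ≤
      (Q ^ 2 - Q - 4) * (Q - 1) * (X ^ 2 - Q) * (X ^ 2 - Q ^ 3) := by
  have hQ0 : 0 ≤ Q := by linarith
  have hX0 : 0 ≤ X := le_trans (by positivity) hX
  have hbracket : 0 ≤ 4 * X ^ 2 - (Q ^ 3 + 4 * Q ^ 2 + 3 * Q) * X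
      - (Q ^ 6 - 2 * Q ^ 5 - 3 * Q ^ 4 + 2 * Q ^ 3 - 6 * Q ^ 2 + 4 * Q) := by
    nlinarith [mul_nonneg hX0 (sub_nonneg.2 hX), mul_nonneg (mul_nonneg hX0 hQ0) (sub_nonneg.2 hQ),
      mul_nonneg (pow_nonneg hQ0 4) (sub_nonneg.2 hQ), mul_nonneg (pow_nonneg hQ0 5) (sub_nonneg.2 hQ),
      mul_nonneg hQ0 (sub_nonneg.2 hQ), mul_nonneg (pow_nonneg hQ0 2) (sub_nonneg.2 hQ)]
  have hconst : 0 ≤ Q ^ 3 - 2 * Q ^ 2 - 3 * Q + 4 := by nlinarith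
  linear_combination mul_nonneg (sq_nonneg X) hbracket + mul_nonneg (pow_nonneg hQ0 4) hconst

lemma lemma37_rational_ineq (Q X : ℚ) (hQ : 3 ≤ Q) (hX : Q ^ 3 ≤ X) :
    (1 - (1 + 3 / Q) * ((X - 1) * (X - Q) / ((Q - 1) * (X ^ 2 - Q)))) / (1 - Q ^ 3 / X ^ 2) ≤
      1 - 1 / Q - 4 / Q ^ 2 := by
  have hQ1 : 0 < Q - 1 := by linarith
  have hQ3X : 0 < X ^ 2 - Q ^ 3 := by nlinarith [pow_le_pow_left₀ (by norm_num) hQ 3]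
  have hQX : 0 < X ^ 2 - Q := by nlinarith [pow_le_pow_left₀ (by norm_num) hQ 2]
  have hlhs : (1 - (1 + 3 / Q) * ((X - 1) * (X - Q) / ((Q - 1) * (X ^ 2 - Q)))) / (1 - Q ^ 3 / X ^ 2) =
      (Q * (Q - 1) * (X ^ 2 - Q) - (Q + 3) * (X - 1) * (X - Q)) * X ^ 2 /
        (Q * (Q - 1) * (X ^ 2 - Q) * (X ^ 2 - Q ^ 3)) := by
    have hX0 : X ≠ 0 := by rintro rfl; linarith
    field_simp [hQ1.ne', hQ3X.ne', hQX.ne']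
  rw [hlhs, show 1 - 1 / Q - 4 / Q ^ 2 = (Q ^ 2 - Q - 4) / Q ^ 2 by field_simp,
    div_le_div_iff₀ (by positivity) (by positivity)]
  nlinarith [lemma37_cleared_ineq Q X hQ hX]

/-- The key estimate in Lemma 3.7: for integers `q ≥ 3`, `k ≥ 4`, with
`y = (1 + 3/q)·[k choose 1]_q·[2k-2 choose k-2]_q` and `v = [2k choose k]_q`,
`(q^{k(k-1)} - q^{k²}(1 + q^{-k})·y/v) / (q^{k(k-1)}(1 - q^{-2k+3})) ≤ 1 - 1/q - 4/q²`. -/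
theorem lemma37_key_estimate (q k : ℕ) (hq : 3 ≤ q) (hk : 4 ≤ k)
    (y v : ℚ)
    (hy : y = (1 + 3 / (q : ℚ)) * gaussBinom q k 1 * gaussBinom q (2 * k - 2) (k - 2))
    (hv : v = gaussBinom q (2 * k) k) :
    ((q : ℚ) ^ (k * (k - 1)) - (q : ℚ) ^ (k * k) * (1 + 1 / (q : ℚ) ^ k) * y / v) /
        ((q : ℚ) ^ (k * (k - 1)) * (1 - (q : ℚ) ^ 3 / (q : ℚ) ^ (2 * k))) ≤
      1 - 1 / (q : ℚ) - 4 / (q : ℚ) ^ 2 := by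
  obtain ⟨m, rfl⟩ : ∃ m, k = m + 2 := ⟨k - 2, by omega⟩
  rw [show 2 * (m + 2) - 2 = 2 * m + 2 by omega, Nat.add_sub_cancel] at hy
  rw [show 2 * (m + 2) = 2 * m + 4 by ring] at hv ⊢
  have hgauss := pow_add_one_mul_gaussBinom_div (show 1 < q by omega) m
  have hQ : (3 : ℚ) ≤ q := by exact_mod_cast hq
  set X : ℚ := (q : ℚ) ^ (m + 2)
  have hX : (q : ℚ) ^ 3 ≤ X := pow_le_pow_right₀ (by linarith) (by omega)
  have hratio : X * (1 + 1 / X) * y / v =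
      (1 + 3 / q) * ((X - 1) * (X - q) / ((q - 1) * (X ^ 2 - q))) := by
    have hX0 : X ≠ 0 := by positivity
    rw [hy, hv, show X * (1 + 1 / X) = X + 1 by field_simp]
    linear_combination (1 + 3 / (q : ℚ)) * hgauss
  set P : ℚ := (q : ℚ) ^ ((m + 2) * (m + 2 - 1))
  have hP : P ≠ 0 := by positivity
  rw [show (q : ℚ) ^ ((m + 2) * (m + 2)) = P * X by rw [← pow_add]; grind,
    show (q : ℚ) ^ (2 * m + 4) = X ^ 2 by rw [← pow_mul']; ring_nf,
    show P - P * X * (1 + 1 / X) * y / v = P * (1 - X * (1 + 1 / X) * y / v) by ring,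
    mul_div_mul_left _ _ hP, hratio]
  exact lemma37_rational_ineq q X hQ hX
end
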